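/- There exists an absolute constant C > 0 such that the following holds. Let n, r, m be positive integers and δ, η > 0. For each i ∈ [n] let P_i : 𝔽₂^m → 𝔽₂, let Q_{i1},…,Q_{ir} : 𝔽₂^m → 𝔽₂ be functions, and let Γ_i : 𝔽₂^r → 𝔽₂, such that P_i(x) = Γ_i(Q_{i1}(x),…,Q_{ir}(x)) for all x and |Pr_{X ~ Unif(𝔽₂^m)}[P_i(X) = 1] − 1/3| ≥ δ. Suppose that for all i ≠ j the distribution on 𝔽₂^{2r} of the tuple (Q_{i1}(X),…,Q_{ir}(X), Q_{j1}(X),…,Q_{jr}(X)), for X uniform on 𝔽₂^m, is within total variation distance η of the uniform distribution on 𝔽₂^{2r}. Then ‖(P₁,…,Pₙ) − Ber(1/3)^⊗n‖_TV ≥ 1 − C·η/δ² − C/(δ²·n). -/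

import Mathlib

open Finset

/-- Distribution of `f(X)` on `β` for `X` uniform on the finite type `α`. -/
noncomputable def distOf {α β : Type*} [Fintype α] [DecidableEq β] (f : α → β) (y : β) : ℝ :=
  ((Finset.univ.filter fun x => f x = y).card : ℝ) / (Fintype.card α : ℝ)

/-- Output distribution on `𝔽₂ⁿ` of the tuple `(P₁(X),…,Pₙ(X))` for uniform `X ∈ 𝔽₂^m`. -/
noncomputable def outDist {m n : ℕ} (P : Fin n → (Fin m → ZMod 2) → ZMod 2) :
    (Fin n → ZMod 2) → ℝ :=
  distOf (fun x i => P i x)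

/-- Total variation distance between two distributions on a finite type. -/
noncomputable def tvDist {β : Type*} [Fintype β] (μ ν : β → ℝ) : ℝ :=
  (1 / 2) * ∑ y, |μ y - ν y|

/-- The distribution `Ber(1/3)^{⊗n}` on `𝔽₂ⁿ`. -/
noncomputable def ber13 {n : ℕ} (y : Fin n → ZMod 2) : ℝ :=
  (1 / 3 : ℝ) ^ (Finset.univ.filter fun i => y i = 1).card *
    (2 / 3 : ℝ) ^ (n - (Finset.univ.filter fun i => y i = 1).card)

/-- `P : 𝔽₂^m → 𝔽₂` has degree at most `d`. -/
def DegLE {m : ℕ} (d : ℕ) (P : (Fin m → ZMod 2) → ZMod 2) : Prop :=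
  ∃ p : MvPolynomial (Fin m) (ZMod 2), p.totalDegree ≤ d ∧ ∀ x, MvPolynomial.eval x p = P x

/-- `rank_{d'}(P) ≤ k`. -/
def RankLE {m : ℕ} (d' k : ℕ) (P : (Fin m → ZMod 2) → ZMod 2) : Prop :=
  ∃ (Q : Fin k → (Fin m → ZMod 2) → ZMod 2) (Γ : (Fin k → ZMod 2) → ZMod 2),
    (∀ j, DegLE d' (Q j)) ∧ ∀ x, P x = Γ (fun j => Q j x)

/-- `Pr_{X uniform}[P(X) = 1]`. -/
noncomputable def prOne {m : ℕ} (P : (Fin m → ZMod 2) → ZMod 2) : ℝ :=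
  distOf P 1


/-!
Weight the coordinates by the signs `cᵢ = sign (Pr[Pᵢ = 1] - 1/3)` and look at the statistic
`Z(y) = ∑ cᵢ yᵢ`. Its mean under the output distribution exceeds its mean under `Ber(1/3)^⊗n` by
`∑ |Pr[Pᵢ = 1] - 1/3| ≥ n δ`. Under `Ber(1/3)^⊗n` the coordinates are independent, so the variance
of `Z` is at most `2n/9`. Under the output distribution, near-uniformity of `(Qᵢ, Qⱼ)` makes
`Pᵢ = Γᵢ ∘ Qᵢ` and `Pⱼ = Γⱼ ∘ Qⱼ` almost uncorrelated (`|Cov| ≤ 6η`), so the variance is at most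
`n + 6n²η`. Chebyshev's inequality then shows that the threshold halfway between the two means
separates the distributions up to an error `O(η / δ² + 1 / (δ² n))`.
-/

open scoped BigOperators

section distOf

variable {α β : Type*} [Fintype α] [DecidableEq β]

lemma distOf_nonneg (g : α → β) (y : β) : 0 ≤ distOf g y := by
  unfold distOf
  positivity

variable [Fintype β]

lemma sum_distOf_mul (g : α → β) (F : β → ℝ) : ∑ y, distOf g y * F y = 𝔼 x, F (g x) := by
  simp_rw [Fintype.expect_eq_sum_div_card, distOf, div_mul_eq_mul_div, ← Finset.sum_div,
    ← Finset.sum_fiberwise' univ g F, Finset.sum_const, nsmul_eq_mul]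

lemma sum_distOf [Nonempty α] (g : α → β) : ∑ y, distOf g y = 1 := by
  simpa using sum_distOf_mul g 1

end distOf

section tvDist

variable {β : Type*} [Fintype β] {μ ν : β → ℝ}

lemma sum_sub_sum_le_tvDist (hμ : ∑ y, μ y = 1) (hν : ∑ y, ν y = 1) (A : Finset β) :
    ∑ y ∈ A, μ y - ∑ y ∈ A, ν y ≤ tvDist μ ν := by
  classical
  have hA : ∑ y ∈ A, (μ y - ν y) ≤ ∑ y ∈ A, |μ y - ν y| :=
    sum_le_sum fun y _ => le_abs_self _
  have hAc : ∑ y ∈ Aᶜ, (ν y - μ y) ≤ ∑ y ∈ Aᶜ, |μ y - ν y| :=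
    sum_le_sum fun y _ => by rw [← neg_sub]; exact neg_le_abs _
  have hμA := sum_add_sum_compl A μ
  have hνA := sum_add_sum_compl A ν
  rw [sum_sub_distrib] at hA hAc
  rw [tvDist, ← sum_add_sum_compl A]
  linarith

lemma abs_sum_mul_sub_sum_mul_le_tvDist {F : β → ℝ} (hF : ∀ y, |F y| ≤ 1) :
    |∑ y, μ y * F y - ∑ y, ν y * F y| ≤ 2 * tvDist μ ν := by
  rw [tvDist, ← mul_assoc, mul_one_div_cancel two_ne_zero, one_mul, ← sum_sub_distrib]
  calc |∑ y, (μ y * F y - ν y * F y)| ≤ ∑ y, |μ y * F y - ν y * F y| := abs_sum_le_sum_abs _ _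
    _ ≤ ∑ y, |μ y - ν y| := sum_le_sum fun y _ => by
      rw [← sub_mul, abs_mul]; exact mul_le_of_le_one_right (abs_nonneg _) (hF y)

lemma abs_sum_mul_le_one (hμ0 : ∀ y, 0 ≤ μ y) (hμ : ∑ y, μ y = 1) {F : β → ℝ}
    (hF : ∀ y, |F y| ≤ 1) : |∑ y, μ y * F y| ≤ 1 := by
  calc |∑ y, μ y * F y| ≤ ∑ y, |μ y * F y| := abs_sum_le_sum_abs _ _
    _ ≤ ∑ y, μ y := sum_le_sum fun y _ => by
      rw [abs_mul, abs_of_nonneg (hμ0 y)]; exact mul_le_of_le_one_right (hμ0 y) (hF y)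
    _ = 1 := hμ

lemma sq_mul_sum_le_sum_mul_sq (hμ0 : ∀ y, 0 ≤ μ y) (Z : β → ℝ) {t : ℝ} (ht : 0 ≤ t)
    {A : Finset β} (hA : ∀ y ∈ A, t ≤ |Z y|) : t ^ 2 * ∑ y ∈ A, μ y ≤ ∑ y, μ y * Z y ^ 2 := by
  rw [mul_sum]
  calc ∑ y ∈ A, t ^ 2 * μ y ≤ ∑ y ∈ A, μ y * Z y ^ 2 := sum_le_sum fun y hy => by
        rw [mul_comm, ← sq_abs (Z y)]
        exact mul_le_mul_of_nonneg_left (pow_le_pow_left₀ ht (hA y hy) 2) (hμ0 y)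
    _ ≤ ∑ y, μ y * Z y ^ 2 :=
        sum_le_sum_of_subset_of_nonneg (subset_univ A) fun y _ _ => by
          have := hμ0 y; positivity

/-- Chebyshev on both sides: the set `{Z₀ ≥ t}` has `ν`-mass at most `a / t²`, and its complement,
where `|Z₁| > t`, has `μ`-mass at most `b / t²`. -/
theorem one_sub_div_sq_le_tvDist (hμ0 : ∀ y, 0 ≤ μ y) (hν0 : ∀ y, 0 ≤ ν y)
    (hμ : ∑ y, μ y = 1) (hν : ∑ y, ν y = 1) {Z₀ Z₁ : β → ℝ} {t a b : ℝ} (ht : 0 < t)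
    (hZ : ∀ y, Z₁ y + 2 * t ≤ Z₀ y) (ha : ∑ y, ν y * Z₀ y ^ 2 ≤ a)
    (hb : ∑ y, μ y * Z₁ y ^ 2 ≤ b) :
    1 - (a + b) / t ^ 2 ≤ tvDist μ ν := by
  classical
  set A := univ.filter fun y => t ≤ Z₀ y
  have hνA : t ^ 2 * ∑ y ∈ A, ν y ≤ a :=
    (sq_mul_sum_le_sum_mul_sq hν0 Z₀ ht.le fun y hy =>
      (mem_filter.1 hy).2.trans (le_abs_self _)).trans ha
  have hμAc : t ^ 2 * ∑ y ∈ Aᶜ, μ y ≤ b := by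
    refine (sq_mul_sum_le_sum_mul_sq hμ0 Z₁ ht.le fun y hy => ?_).trans hb
    have : Z₀ y < t := by simpa [A] using hy
    exact (by linarith [hZ y] : t ≤ -Z₁ y).trans (neg_le_abs _)
  rw [← le_div_iff₀' (by positivity)] at hνA hμAc
  have hμA := sum_add_sum_compl A μ
  have hgap := sum_sub_sum_le_tvDist hμ hν A
  rw [add_div]
  linarith

end tvDist

section cov

variable {α : Type*} [Fintype α]

noncomputable def cov (f g : α → ℝ) : ℝ := 𝔼 x, f x * g x - (𝔼 x, f x) * 𝔼 x, g x

variable [Nonempty α]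

lemma expect_sub_mul_sub_eq_cov (f g : α → ℝ) :
    𝔼 x, (f x - 𝔼 y, f y) * (g x - 𝔼 y, g y) = cov f g := by
  simp only [sub_mul, mul_sub, expect_sub_distrib, ← expect_mul, ← mul_expect,
    Fintype.expect_const, cov]
  ring

lemma abs_cov_le_one {f g : α → ℝ} (hf : ∀ x, f x ∈ Set.Icc 0 1) (hg : ∀ x, g x ∈ Set.Icc 0 1) :
    |cov f g| ≤ 1 := by
  have hfg : ∀ x, f x * g x ∈ Set.Icc (0 : ℝ) 1 := fun x =>
    ⟨mul_nonneg (hf x).1 (hg x).1, mul_le_one₀ (hf x).2 (hg x).1 (hg x).2⟩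
  have hE : ∀ h : α → ℝ, (∀ x, h x ∈ Set.Icc (0 : ℝ) 1) → 𝔼 x, h x ∈ Set.Icc (0 : ℝ) 1 :=
    fun h hh => ⟨expect_nonneg fun x _ => (hh x).1, expect_le univ_nonempty fun x _ => (hh x).2⟩
  obtain ⟨hfg0, hfg1⟩ := hE _ hfg
  obtain ⟨hf0, hf1⟩ := hE _ hf
  obtain ⟨hg0, hg1⟩ := hE _ hg
  rw [cov, abs_sub_le_iff]
  constructor <;> nlinarith

lemma expect_sq_le_sum_abs_cov {ι : Type*} [Fintype ι] (f : ι → α → ℝ) {c : ι → ℝ}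
    (hc : ∀ i, |c i| ≤ 1) :
    𝔼 x, (∑ i, c i * (f i x - 𝔼 y, f i y)) ^ 2 ≤ ∑ i, ∑ j, |cov (f i) (f j)| := by
  calc 𝔼 x, (∑ i, c i * (f i x - 𝔼 y, f i y)) ^ 2
      = ∑ i, ∑ j, c i * c j * cov (f i) (f j) := by
        simp_rw [sq, sum_mul_sum, expect_sum_comm, ← expect_sub_mul_sub_eq_cov, mul_expect]
        congr! 3
        ring
    _ ≤ ∑ i, ∑ j, |cov (f i) (f j)| := by
        gcongr with i _ j _
        refine (le_abs_self _).trans ?_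
        rw [abs_mul, abs_mul]
        exact mul_le_of_le_one_left (abs_nonneg _)
          (mul_le_one₀ (hc i) (abs_nonneg _) (hc j))

end cov

section nearUniform

variable {β : Type*} [Fintype β] {D U : β → ℝ}

lemma abs_sum_mul_sub_mul_le_six_mul_tvDist (hD0 : ∀ y, 0 ≤ D y) (hD : ∑ y, D y = 1)
    (hU0 : ∀ y, 0 ≤ U y) (hU : ∑ y, U y = 1) {F G : β → ℝ} (hF : ∀ y, |F y| ≤ 1)
    (hG : ∀ y, |G y| ≤ 1)
    (hFG : ∑ y, U y * (F y * G y) = (∑ y, U y * F y) * ∑ y, U y * G y) :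
    |∑ y, D y * (F y * G y) - (∑ y, D y * F y) * ∑ y, D y * G y| ≤ 6 * tvDist D U := by
  have hFG' := abs_sum_mul_sub_sum_mul_le_tvDist (μ := D) (ν := U) fun y => by
    rw [abs_mul]; exact mul_le_one₀ (hF y) (abs_nonneg _) (hG y)
  have hF' := abs_sum_mul_sub_sum_mul_le_tvDist (μ := D) (ν := U) hF
  have hG' := abs_sum_mul_sub_sum_mul_le_tvDist (μ := D) (ν := U) hG
  have hUF := abs_sum_mul_le_one hU0 hU hF
  have hDG := abs_sum_mul_le_one hD0 hD hG
  set dFG := ∑ y, D y * (F y * G y)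
  set dF := ∑ y, D y * F y
  set dG := ∑ y, D y * G y
  set uF := ∑ y, U y * F y
  set uG := ∑ y, U y * G y
  calc |dFG - dF * dG| = |(dFG - uF * uG) - uF * (dG - uG) - (dF - uF) * dG| := by
        congr 1; ring
    _ ≤ |dFG - uF * uG| + |uF| * |dG - uG| + |dF - uF| * |dG| := by
        rw [← abs_mul, ← abs_mul]
        exact (abs_sub _ _).trans (add_le_add_left (abs_sub _ _) _)
    _ ≤ 2 * tvDist D U + 1 * (2 * tvDist D U) + 2 * tvDist D U * 1 := by
        rw [← hFG]
        gcongr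
        exact (abs_nonneg _).trans hF'
    _ = 6 * tvDist D U := by ring

end nearUniform

section uniform

variable {β γ : Type*} [Fintype β] [Fintype γ]

lemma sum_one_div_card_mul (H : β → ℝ) : ∑ y, 1 / (Fintype.card β : ℝ) * H y = 𝔼 y, H y := by
  simp_rw [one_div_mul_eq_div, ← sum_div, Fintype.expect_eq_sum_div_card]

lemma sum_one_div_card_mul_mul [Nonempty β] [Nonempty γ] (F : β → ℝ) (G : γ → ℝ) :
    ∑ z : β × γ, 1 / (Fintype.card (β × γ) : ℝ) * (F z.1 * G z.2) =
      (∑ z : β × γ, 1 / (Fintype.card (β × γ) : ℝ) * F z.1) *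
        ∑ z : β × γ, 1 / (Fintype.card (β × γ) : ℝ) * G z.2 := by
  simp_rw [sum_one_div_card_mul]
  rw [← univ_product_univ]
  simp_rw [expect_product, Fintype.expect_const, Fintype.expect_mul_expect]

lemma abs_cov_comp_le {α : Type*} [Fintype α] [Nonempty α] [DecidableEq β] [DecidableEq γ]
    (u : α → β) (v : α → γ) {F : β → ℝ} {G : γ → ℝ} (hF : ∀ b, |F b| ≤ 1)
    (hG : ∀ c, |G c| ≤ 1) :
    |cov (fun x => F (u x)) (fun x => G (v x))| ≤
      6 * tvDist (distOf fun x => (u x, v x)) fun _ => 1 / (Fintype.card (β × γ) : ℝ) := by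
  have : Nonempty β := ⟨u (Classical.arbitrary α)⟩
  have : Nonempty γ := ⟨v (Classical.arbitrary α)⟩
  have hU : ∑ _z : β × γ, 1 / (Fintype.card (β × γ) : ℝ) = 1 := by
    simpa using sum_one_div_card_mul (1 : β × γ → ℝ)
  have key := abs_sum_mul_sub_mul_le_six_mul_tvDist (distOf_nonneg _)
    (sum_distOf fun x => (u x, v x)) (fun _ => by positivity) hU (F := fun z => F z.1) (G := fun z => G z.2)
    (fun z => hF z.1) (fun z => hG z.2) (sum_one_div_card_mul_mul F G)
  simpa only [sum_distOf_mul, cov] using key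

end uniform

section productWeights

variable {ι γ : Type*} [Fintype ι] [DecidableEq ι] [Fintype γ] {q h : γ → ℝ}

lemma sum_prod_eq_one (hq : ∑ v, q v = 1) : ∑ y : ι → γ, ∏ k, q (y k) = 1 := by
  rw [← Fintype.prod_sum, hq, prod_const_one]

lemma sum_prod_mul_mul_eq (hq : ∑ v, q v = 1) (hqh : ∑ v, q v * h v = 0) (i j : ι) :
    ∑ y : ι → γ, (∏ k, q (y k)) * (h (y i) * h (y j)) =
      if i = j then ∑ v, q v * h v ^ 2 else 0 := by
  set φ : ι → γ → ℝ := fun k v => q v * (if k = i then h v else 1) * (if k = j then h v else 1)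
  have hφ : ∀ y : ι → γ, (∏ k, q (y k)) * (h (y i) * h (y j)) = ∏ k, φ k (y k) := fun y => by
    simp only [φ, prod_mul_distrib, prod_ite_eq', mem_univ, if_true]
    ring
  rw [sum_congr rfl fun y _ => hφ y, ← Fintype.prod_sum]
  split_ifs with hij
  · subst hij
    rw [Fintype.prod_eq_single i fun k hk => by simp [φ, hk, hq]]
    simp only [φ, if_true, sq, mul_assoc]
  · exact prod_eq_zero (mem_univ i) (by simpa [φ, hij] using hqh)

lemma sum_prod_mul_sq_sum (hq : ∑ v, q v = 1) (hqh : ∑ v, q v * h v = 0) (c : ι → ℝ) :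
    ∑ y : ι → γ, (∏ k, q (y k)) * (∑ i, c i * h (y i)) ^ 2 =
      (∑ i, c i ^ 2) * ∑ v, q v * h v ^ 2 := by
  calc ∑ y : ι → γ, (∏ k, q (y k)) * (∑ i, c i * h (y i)) ^ 2
      = ∑ i, ∑ j, c i * c j * ∑ y : ι → γ, (∏ k, q (y k)) * (h (y i) * h (y j)) := by
        simp_rw [sq, sum_mul_sum, mul_sum]
        rw [sum_comm]
        refine sum_congr rfl fun i _ => ?_
        rw [sum_comm]
        refine sum_congr rfl fun j _ => sum_congr rfl fun y _ => ?_
        ring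
    _ = (∑ i, c i ^ 2) * ∑ v, q v * h v ^ 2 := by
        simp_rw [sum_prod_mul_mul_eq hq hqh, mul_ite, mul_zero, sum_ite_eq, mem_univ, if_true,
          sum_mul, sq]

end productWeights

section Bernoulli

lemma sum_zmod_two (f : ZMod 2 → ℝ) : ∑ v, f v = f 0 + f 1 :=
  Fin.sum_univ_two f

lemma ber13_eq_prod {n : ℕ} (y : Fin n → ZMod 2) :
    ber13 y = ∏ k, if y k = 1 then (1 / 3 : ℝ) else 2 / 3 := by
  rw [prod_ite, prod_const, prod_const, ber13, filter_not,
    card_sdiff_of_subset (filter_subset _ _), card_univ, Fintype.card_fin]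

lemma sum_ber13 {n : ℕ} : ∑ y : Fin n → ZMod 2, ber13 y = 1 := by
  simp_rw [ber13_eq_prod]
  exact sum_prod_eq_one (q := fun v => if v = 1 then 1 / 3 else 2 / 3) (by norm_num [sum_zmod_two])

lemma ber13_nonneg {n : ℕ} (y : Fin n → ZMod 2) : 0 ≤ ber13 y := by
  unfold ber13
  positivity

lemma sum_ber13_mul_sq {n : ℕ} (c : Fin n → ℝ) :
    ∑ y : Fin n → ZMod 2, ber13 y * (∑ i, c i * (((y i).val : ℝ) - 1 / 3)) ^ 2 =
      (∑ i, c i ^ 2) * (2 / 9) := by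
  simp_rw [ber13_eq_prod]
  rw [sum_prod_mul_sq_sum (q := fun v => if v = 1 then 1 / 3 else 2 / 3)
    (h := fun v : ZMod 2 => (v.val : ℝ) - 1 / 3)]
  all_goals simp only [sum_zmod_two, ZMod.val_zero, ZMod.val_one]; norm_num

end Bernoulli

section signs

lemma abs_sign_le_one (x : ℝ) : |(SignType.sign x : ℝ)| ≤ 1 := by
  rcases lt_trichotomy x 0 with h | h | h <;> simp [h]

lemma sum_sign_mul_sub_add_le {ι : Type*} [Fintype ι] {p x : ι → ℝ} {a δ : ℝ}
    (hp : ∀ i, δ ≤ |p i - a|) :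
    ∑ i, SignType.sign (p i - a) * (x i - p i) + Fintype.card ι * δ ≤
      ∑ i, SignType.sign (p i - a) * (x i - a) := by
  have hsplit : ∀ i, (SignType.sign (p i - a) : ℝ) * (x i - a) =
      SignType.sign (p i - a) * (x i - p i) + |p i - a| := fun i => by
    rw [← sign_mul_self]; ring
  have hδ : Fintype.card ι * δ ≤ ∑ i, |p i - a| := by
    simpa using sum_le_sum fun i (_ : i ∈ univ) => hp i
  simp_rw [hsplit, sum_add_distrib]
  linarith

end signs

section outputDistribution

variable {n r m : ℕ}

lemma prOne_eq_expect (P : (Fin m → ZMod 2) → ZMod 2) : prOne P = 𝔼 x, ((P x).val : ℝ) := by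
  rw [prOne, ← sum_distOf_mul P fun v => (v.val : ℝ), sum_zmod_two, ZMod.val_zero, ZMod.val_one]
  simp

lemma sum_outDist_mul_sq_le {η : ℝ} (hη : 0 ≤ η) {P : Fin n → (Fin m → ZMod 2) → ZMod 2}
    {Q : Fin n → Fin r → (Fin m → ZMod 2) → ZMod 2} {Γ : Fin n → (Fin r → ZMod 2) → ZMod 2}
    (hPQ : ∀ i x, P i x = Γ i (fun j => Q i j x))
    (hQ : ∀ i j, i ≠ j →
      tvDist (distOf (fun x => ((fun a => Q i a x), (fun a => Q j a x))))
        (fun _ : (Fin r → ZMod 2) × (Fin r → ZMod 2) =>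
          1 / (Fintype.card ((Fin r → ZMod 2) × (Fin r → ZMod 2)) : ℝ)) ≤ η)
    {c : Fin n → ℝ} (hc : ∀ i, |c i| ≤ 1) :
    ∑ y, outDist P y * (∑ i, c i * (((y i).val : ℝ) - prOne (P i))) ^ 2 ≤
      n + 6 * n ^ 2 * η := by
  set f : Fin n → (Fin m → ZMod 2) → ℝ := fun i x => (P i x).val
  have hval : ∀ v : ZMod 2, (v.val : ℝ) ∈ Set.Icc 0 1 := fun v =>
    ⟨by positivity, by exact_mod_cast Nat.le_of_lt_succ (ZMod.val_lt v)⟩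
  have hcov : ∀ i j, |cov (f i) (f j)| ≤ (if i = j then 1 else 0) + 6 * η := by
    intro i j
    split_ifs with hij
    · linarith [abs_cov_le_one (fun x => hval (P i x)) (fun x => hval (P j x))]
    · have hf : ∀ k, f k = fun x => ((Γ k (fun a => Q k a x)).val : ℝ) := fun k =>
        funext fun x => by simp only [f, hPQ]
      have habs : ∀ k (w : Fin r → ZMod 2), |((Γ k w).val : ℝ)| ≤ 1 := fun k w => by
        rw [abs_of_nonneg (hval _).1]; exact (hval _).2
      rw [hf, hf, zero_add]
      exact (abs_cov_comp_le _ _ (habs i) (habs j)).trans (by linarith [hQ i j hij])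
  calc ∑ y, outDist P y * (∑ i, c i * (((y i).val : ℝ) - prOne (P i))) ^ 2
      = 𝔼 x, (∑ i, c i * (f i x - 𝔼 y, f i y)) ^ 2 := by
        simp_rw [outDist, sum_distOf_mul, prOne_eq_expect, f]
    _ ≤ ∑ i, ∑ j, |cov (f i) (f j)| := expect_sq_le_sum_abs_cov f hc
    _ ≤ ∑ i : Fin n, ∑ j : Fin n, ((if i = j then 1 else 0) + 6 * η) := by
        gcongr with i _ j _
        exact hcov i j
    _ = n + 6 * n ^ 2 * η := by
        simp only [sum_add_distrib, sum_ite_eq, mem_univ, if_true, sum_const, card_univ,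
          Fintype.card_fin, nsmul_eq_mul]
        ring

end outputDistribution

/-- Chebyshev lemma. -/
theorem chebyshev_lemma :
    ∃ C > (0:ℝ), ∀ n r m : ℕ, 0 < n → 0 < r → 0 < m →
      ∀ δ η : ℝ, 0 < δ → 0 < η →
      ∀ P : Fin n → (Fin m → ZMod 2) → ZMod 2,
      ∀ Q : Fin n → Fin r → (Fin m → ZMod 2) → ZMod 2,
      ∀ Γ : Fin n → (Fin r → ZMod 2) → ZMod 2,
        (∀ i x, P i x = Γ i (fun j => Q i j x)) →
        (∀ i, |prOne (P i) - 1/3| ≥ δ) →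
        (∀ i j, i ≠ j →
          tvDist (distOf (fun x => ((fun a => Q i a x), (fun a => Q j a x))))
            (fun _ : (Fin r → ZMod 2) × (Fin r → ZMod 2) =>
              1 / (Fintype.card ((Fin r → ZMod 2) × (Fin r → ZMod 2)) : ℝ)) ≤ η) →
        tvDist (outDist P) ber13 ≥ 1 - C * η / δ^2 - C / (δ^2 * (n:ℝ)) := by
  refine ⟨24, by norm_num, fun n r m hn _ _ δ η hδ hη P Q Γ hPQ hP hQ => ?_⟩
  set c : Fin n → ℝ := fun i => SignType.sign (prOne (P i) - 1 / 3)
  have hc : ∀ i, |c i| ≤ 1 := fun i => abs_sign_le_one _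
  have hgap : ∀ y : Fin n → ZMod 2, ∑ i, c i * (((y i).val : ℝ) - prOne (P i)) + 2 * (n * δ / 2)
      ≤ ∑ i, c i * (((y i).val : ℝ) - 1 / 3) := fun y => by
    have := sum_sign_mul_sub_add_le (x := fun i => ((y i).val : ℝ)) hP
    rw [Fintype.card_fin] at this
    linarith
  have hν : ∑ y, ber13 y * (∑ i, c i * (((y i).val : ℝ) - 1 / 3)) ^ 2 ≤ n * (2 / 9) := by
    rw [sum_ber13_mul_sq]
    gcongr
    simpa using sum_le_sum fun i (_ : i ∈ univ) => sq_le_one_iff_abs_le_one _ |>.2 (hc i)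
  have key := one_sub_div_sq_le_tvDist (μ := outDist P) (distOf_nonneg _) ber13_nonneg
    (sum_distOf _) sum_ber13 (by positivity) hgap hν (sum_outDist_mul_sq_le hη.le hPQ hQ hc)
  have hn' : (0 : ℝ) < n := by exact_mod_cast hn
  have hconst : (n * (2 / 9) + (n + 6 * n ^ 2 * η)) / (n * δ / 2) ^ 2 =
      44 / 9 / (δ ^ 2 * n) + 24 * η / δ ^ 2 := by
    field_simp
    ring
  have h44 : 44 / 9 / (δ ^ 2 * n) ≤ 24 / (δ ^ 2 * n) := by gcongr; norm_num
  linarith
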